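/- arXiv:2107.05163 — 9 statements merged into one kernel-verified Lean document; each statement's English description precedes it below -/
import Mathlib

section
/- Let α∈(0,1), a>0 and 0<κ<1, and define φ(z) = (a + κ z^{1/α})^α for z≥0. Then |φ(z₁) − φ(z₂)| ≤ κ^α |z₁ − z₂| for all z₁,z₂ ≥ 0; in particular φ is a contraction with constant κ^α < 1. -/
/-!
Since `α · (1/α) = 1`, the derivative of `φ(z) = (a + κ z^(1/α))^α` simplifies to
`φ'(z) = (a + κ z^(1/α))^(α-1) · κ z^(1/α-1) = κ^α · (κ z^(1/α) / (a + κ z^(1/α)))^(1-α)`,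
which lies in `[0, κ^α]`; the mean value inequality on `[0, ∞)` concludes.
-/

open Real Set

theorem hasDerivAt_rpow_add_mul_rpow {a κ p α z : ℝ} (hp : 1 ≤ p) (hpos : 0 < a + κ * z ^ p) :
    HasDerivAt (fun z => (a + κ * z ^ p) ^ α)
      (α * (a + κ * z ^ p) ^ (α - 1) * (κ * (p * z ^ (p - 1)))) z :=
  ((hasDerivAt_rpow_const (p := α) (Or.inl hpos.ne')).comp z
    (((hasDerivAt_rpow_const (Or.inr hp)).const_mul κ).const_add a) :)

theorem mul_rpow_one_div_sub_one_le {a κ α z : ℝ} (hα0 : 0 < α) (hα1 : α ≤ 1) (ha : 0 ≤ a)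
    (hκ : 0 ≤ κ) (hz : 0 ≤ z) :
    κ * z ^ (1 / α - 1) ≤ κ ^ α * (a + κ * z ^ (1 / α)) ^ (1 - α) := by
  have hsplit : κ * z ^ (1 / α - 1) = κ ^ α * (κ * z ^ (1 / α)) ^ (1 - α) := by
    rw [mul_rpow hκ (rpow_nonneg hz _), ← rpow_mul hz, ← mul_assoc,
      ← rpow_add' hκ (by norm_num), one_div_mul_eq_div, sub_div, div_self hα0.ne']
    norm_num
  rw [hsplit]
  gcongr
  · linarith

theorem abs_deriv_rpow_add_mul_rpow_one_div_le {a κ α z : ℝ} (hα0 : 0 < α) (hα1 : α ≤ 1)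
    (ha : 0 < a) (hκ : 0 ≤ κ) (hz : 0 ≤ z) :
    |α * (a + κ * z ^ (1 / α)) ^ (α - 1) * (κ * (1 / α * z ^ (1 / α - 1)))| ≤ κ ^ α := by
  set g := a + κ * z ^ (1 / α)
  have hg : 0 < g := by positivity
  have hsimp : α * g ^ (α - 1) * (κ * (1 / α * z ^ (1 / α - 1)))
      = g ^ (α - 1) * (κ * z ^ (1 / α - 1)) := by
    field_simp
  have hcancel : g ^ (α - 1) * g ^ (1 - α) = 1 := by
    rw [← rpow_add hg]
    norm_num
  rw [hsimp, abs_of_nonneg (by positivity)]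
  calc g ^ (α - 1) * (κ * z ^ (1 / α - 1))
      ≤ g ^ (α - 1) * (κ ^ α * g ^ (1 - α)) :=
        mul_le_mul_of_nonneg_left (mul_rpow_one_div_sub_one_le hα0 hα1 ha.le hκ hz)
          (rpow_nonneg hg.le _)
    _ = κ ^ α := by rw [mul_left_comm, hcancel, mul_one]

theorem stmt3_general (α a κ : ℝ) (hα0 : 0 < α) (hα1 : α < 1) (ha : 0 < a)
    (hκ0 : 0 < κ) (z₁ z₂ : ℝ) (hz₁ : 0 ≤ z₁) (hz₂ : 0 ≤ z₂) :
    |(a + κ * z₁ ^ (1 / α)) ^ α - (a + κ * z₂ ^ (1 / α)) ^ α| ≤ κ ^ α * |z₁ - z₂| := by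
  have hderiv : ∀ z ∈ Ici (0 : ℝ), HasDerivWithinAt (fun z => (a + κ * z ^ (1 / α)) ^ α)
      (α * (a + κ * z ^ (1 / α)) ^ (α - 1) * (κ * (1 / α * z ^ (1 / α - 1)))) (Ici 0) z :=
    fun z hz => (hasDerivAt_rpow_add_mul_rpow (one_le_one_div hα0 hα1.le)
      (by have : (0 : ℝ) ≤ z := hz; positivity)).hasDerivWithinAt
  have hbound : ∀ z ∈ Ici (0 : ℝ),
      ‖α * (a + κ * z ^ (1 / α)) ^ (α - 1) * (κ * (1 / α * z ^ (1 / α - 1)))‖ ≤ κ ^ α :=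
    fun z hz => abs_deriv_rpow_add_mul_rpow_one_div_le hα0 hα1.le ha hκ0.le hz
  simpa only [Real.norm_eq_abs] using
    (convex_Ici 0).norm_image_sub_le_of_norm_hasDerivWithin_le hderiv hbound hz₂ hz₁

/-- `φ(z) = (a + κ z^(1/α))^α` is a contraction with constant `κ^α < 1`
for `α ∈ (0,1)`, `a > 0`, `0 < κ < 1`. -/
theorem stmt3 (α a κ : ℝ) (hα0 : 0 < α) (hα1 : α < 1) (ha : 0 < a)
    (hκ0 : 0 < κ) (hκ1 : κ < 1) (z₁ z₂ : ℝ) (hz₁ : 0 ≤ z₁) (hz₂ : 0 ≤ z₂) :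
    |(a + κ * z₁ ^ (1 / α)) ^ α - (a + κ * z₂ ^ (1 / α)) ^ α| ≤ κ ^ α * |z₁ - z₂| :=
  stmt3_general α a κ hα0 hα1 ha hκ0 z₁ z₂ hz₁ hz₂
end

section
/- Let P be an irreducible row-stochastic matrix indexed by a finite set 𝕏, and let w : 𝕏 → ℝ be any vector. Set η = Σ_x π_x w(x), where π is the unique stationary distribution of P. Then there exists v : 𝕏 → ℝ such that P v = v + η𝟙 − w, where 𝟙 is the all-ones vector. -/
open Finset

/-- For an irreducible row-stochastic matrix `P` on a finite state space with unique
stationary distribution `π`, and any `w`, setting `η = Σ_x π_x w_x`, there is a vector `v`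
with `P v = v + η 𝟙 - w`. -/
theorem stmt4 {𝕏 : Type*} [Fintype 𝕏] [Nonempty 𝕏] [DecidableEq 𝕏]
    (P : Matrix 𝕏 𝕏 ℝ) (hnn : ∀ x y, 0 ≤ P x y) (hrow : ∀ x, ∑ y, P x y = 1)
    (hirr : ∀ x y, ∃ k : ℕ, 0 < (P ^ k) x y)
    (π : 𝕏 → ℝ) (hπnn : ∀ x, 0 ≤ π x) (hπsum : ∑ x, π x = 1)
    (hstat : ∀ y, ∑ x, π x * P x y = π y)
    (huniq : ∀ π' : 𝕏 → ℝ, (∀ x, 0 ≤ π' x) → ∑ x, π' x = 1 →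
      (∀ y, ∑ x, π' x * P x y = π' y) → π' = π)
    (w : 𝕏 → ℝ) (η : ℝ) (hη : η = ∑ x, π x * w x) :
    ∃ v : 𝕏 → ℝ, ∀ x, ∑ y, P x y * v y = v x + η - w x := by
  classical
  -- powers of P are nonnegative with row sums 1
  have hPk_nn : ∀ k : ℕ, ∀ x y, 0 ≤ (P ^ k) x y := by
    intro k
    induction k with
    | zero =>
      intro x y
      by_cases h : x = y <;> simp [Matrix.one_apply, h]
    | succ k ih =>
      intro x y
      rw [pow_succ, Matrix.mul_apply]
      exact Finset.sum_nonneg fun z _ => mul_nonneg (ih x z) (hnn z y)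
  have hPk_row : ∀ k : ℕ, ∀ x, ∑ y, (P ^ k) x y = 1 := by
    intro k
    induction k with
    | zero => intro x; simp [Matrix.one_apply]
    | succ k ih =>
      intro x
      simp only [pow_succ, Matrix.mul_apply]
      rw [Finset.sum_comm]
      calc ∑ z, ∑ y, (P ^ k) x z * P z y
          = ∑ z, (P ^ k) x z * ∑ y, P z y := by
            simp [Finset.mul_sum]
        _ = 1 := by simp [hrow, ih x]
  set A : Matrix 𝕏 𝕏 ℝ := 1 - P with hA
  have hAapp : ∀ (v : 𝕏 → ℝ) (x : 𝕏), A.mulVec v x = v x - ∑ y, P x y * v y := by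
    intro v x
    rw [hA, Matrix.sub_mulVec, Matrix.one_mulVec]
    simp [Matrix.mulVec, dotProduct]
  -- the kernel of A is the span of the constant vector 1
  have hker : LinearMap.ker A.mulVecLin = Submodule.span ℝ {(fun _ => 1 : 𝕏 → ℝ)} := by
    apply le_antisymm
    · intro v hv
      have hfix : P.mulVec v = v := by
        have h0 : A.mulVec v = 0 := hv
        have : (1 - P).mulVec v = 0 := h0
        rw [Matrix.sub_mulVec, Matrix.one_mulVec, sub_eq_zero] at this
        exact this.symm
      have hfixk : ∀ k : ℕ, (P ^ k).mulVec v = v := by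
        intro k
        induction k with
        | zero => simp [Matrix.one_mulVec]
        | succ k ih =>
          rw [pow_succ', ← Matrix.mulVec_mulVec, ih, hfix]
      -- maximum principle
      obtain ⟨x0, _, hx0⟩ := Finset.exists_max_image (Finset.univ : Finset 𝕏) v
        ⟨Classical.arbitrary 𝕏, Finset.mem_univ _⟩
      set M := v x0 with hM
      have hvM : ∀ y, v y = M := by
        intro y
        obtain ⟨k, hk⟩ := hirr x0 y
        have heq : ∑ z, (P ^ k) x0 z * v z = M := by
          have := congrFun (hfixk k) x0
          simpa [Matrix.mulVec, dotProduct] using this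
        have hzero : ∑ z, (P ^ k) x0 z * (M - v z) = 0 := by
          have : ∑ z, (P ^ k) x0 z * (M - v z)
              = (∑ z, (P ^ k) x0 z * M) - ∑ z, (P ^ k) x0 z * v z := by
            rw [← Finset.sum_sub_distrib]; congr 1; ext z; ring
          rw [this, heq, ← Finset.sum_mul, hPk_row k x0, one_mul, sub_self]
        have hterm : ∀ z ∈ Finset.univ, (P ^ k) x0 z * (M - v z) = 0 := by
          rw [← Finset.sum_eq_zero_iff_of_nonneg]
          · exact hzero
          · intro z _
            exact mul_nonneg (hPk_nn k x0 z) (sub_nonneg.mpr (hx0 z (Finset.mem_univ z)))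
        have := hterm y (Finset.mem_univ y)
        rcases mul_eq_zero.mp this with h | h
        · exact absurd h (ne_of_gt hk)
        · linarith [sub_eq_zero.mp h]
      rw [Submodule.mem_span_singleton]
      exact ⟨M, by funext z; simp [hvM z]⟩
    · rw [Submodule.span_le, Set.singleton_subset_iff]
      show A.mulVec (fun _ => 1) = 0
      funext x
      rw [hAapp]
      simp [hrow x]
  -- the linear functional u ↦ ⟨π, u⟩
  set φ : (𝕏 → ℝ) →ₗ[ℝ] ℝ :=
    { toFun := fun u => ∑ x, π x * u x
      map_add' := by
        intro u v
        simp [mul_add, Finset.sum_add_distrib]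
      map_smul' := by
        intro c u
        simp [Finset.mul_sum]
        congr 1; ext x; ring } with hφ
  have hφ1 : φ (fun _ => 1) = 1 := by simp [hφ, hπsum]
  -- range of A is contained in ker φ
  have hsub : LinearMap.range A.mulVecLin ≤ LinearMap.ker φ := by
    rintro _ ⟨v, rfl⟩
    show φ (A.mulVec v) = 0
    calc φ (A.mulVec v) = ∑ x, π x * (v x - ∑ y, P x y * v y) := by
          simp only [hφ, LinearMap.coe_mk, AddHom.coe_mk]
          exact Finset.sum_congr rfl fun x _ => by rw [hAapp v x]
      _ = (∑ x, π x * v x) - ∑ x, π x * ∑ y, P x y * v y := by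
          rw [← Finset.sum_sub_distrib]; congr 1; ext x; ring
      _ = (∑ x, π x * v x) - ∑ y, (∑ x, π x * P x y) * v y := by
          congr 1
          simp_rw [Finset.mul_sum, Finset.sum_mul]
          rw [Finset.sum_comm]
          exact Finset.sum_congr rfl fun y _ => Finset.sum_congr rfl fun x _ => by ring
      _ = 0 := by
          simp only [hstat]; ring
  -- finrank computations
  have hone_ne : (fun _ => 1 : 𝕏 → ℝ) ≠ 0 := by
    intro h
    have := congrFun h (Classical.arbitrary 𝕏)
    norm_num at this
  have hker_rank : Module.finrank ℝ (LinearMap.ker A.mulVecLin) = 1 := by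
    rw [hker]; exact finrank_span_singleton hone_ne
  have hrn1 := LinearMap.finrank_range_add_finrank_ker A.mulVecLin
  have hrn2 := LinearMap.finrank_range_add_finrank_ker φ
  have hφsurj : LinearMap.range φ = ⊤ := by
    rw [LinearMap.range_eq_top]
    intro c
    exact ⟨fun _ => c • 1, by simpa [hφ, ← Finset.sum_mul, hπsum] using (by ring : (∑ x, π x * (c * 1)) = (∑ x, π x) * c) ▸ rfl⟩
  have hφrange_rank : Module.finrank ℝ (LinearMap.range φ) = 1 := by
    rw [hφsurj, finrank_top]
    simp
  rw [Module.finrank_fintype_fun_eq_card, hker_rank] at hrn1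
  rw [Module.finrank_fintype_fun_eq_card, hφrange_rank] at hrn2
  have hrange_eq : LinearMap.range A.mulVecLin = LinearMap.ker φ :=
    Submodule.eq_of_le_of_finrank_eq hsub (by omega)
  -- w - η • 1 lies in ker φ
  have hmem : (fun x => w x - η) ∈ LinearMap.ker φ := by
    show φ (fun x => w x - η) = 0
    have : ∑ x, π x * (w x - η) = (∑ x, π x * w x) - (∑ x, π x) * η := by
      rw [Finset.sum_mul, ← Finset.sum_sub_distrib]
      exact Finset.sum_congr rfl fun x _ => by ring
    simp only [hφ, LinearMap.coe_mk, AddHom.coe_mk]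
    rw [this, hπsum, hη]; ring
  rw [← hrange_eq] at hmem
  obtain ⟨v, hv⟩ := hmem
  refine ⟨v, fun x => ?_⟩
  have := congrFun hv x
  have hAv : v x - ∑ y, P x y * v y = w x - η := by
    rw [← hAapp v x]; exact this
  linarith
end

section
/- Let 𝕏 be a finite set and T : (𝕏→ℝ₊) → (𝕏→ℝ₊) a monotone operator (f ≤ g pointwise implies Tf ≤ Tg) that satisfies the strict superhomogeneity property: for every r∈(0,1) and every f in the domain with f>0, T(rf)(x) > r·Tf(x) for all x. Then T has at most one fixed point in the set of strictly positive functions on 𝕏. -/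
lemma stmt6aux {𝕏 : Type*} [Fintype 𝕏]
    (T : (𝕏 → ℝ) → (𝕏 → ℝ))
    (hmono : ∀ f g : 𝕏 → ℝ, (∀ x, 0 ≤ f x) → (∀ x, 0 ≤ g x) →
      (∀ x, f x ≤ g x) → ∀ x, T f x ≤ T g x)
    (hsup : ∀ r : ℝ, 0 < r → r < 1 → ∀ f : 𝕏 → ℝ, (∀ x, 0 < f x) →
      ∀ x, r * T f x < T (fun y => r * f y) x)
    (f₁ f₂ : 𝕏 → ℝ) (h₁ : ∀ x, 0 < f₁ x) (h₂ : ∀ x, 0 < f₂ x)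
    (hf₁ : T f₁ = f₁) (hf₂ : T f₂ = f₂) : ∀ x, f₂ x ≤ f₁ x := by
  by_contra h
  push_neg at h
  obtain ⟨x₀, hx₀⟩ := h
  have hne : (Finset.univ : Finset 𝕏).Nonempty := ⟨x₀, Finset.mem_univ _⟩
  obtain ⟨xs, -, hxs⟩ := Finset.exists_min_image Finset.univ (fun x => f₁ x / f₂ x) hne
  set r : ℝ := f₁ xs / f₂ xs with hr
  have hr0 : 0 < r := div_pos (h₁ xs) (h₂ xs)
  have hr1 : r < 1 := by
    have := hxs x₀ (Finset.mem_univ _)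
    have : r ≤ f₁ x₀ / f₂ x₀ := this
    calc r ≤ f₁ x₀ / f₂ x₀ := this
      _ < 1 := (div_lt_one (h₂ x₀)).2 hx₀
  have hle : ∀ x, r * f₂ x ≤ f₁ x := by
    intro x
    have := hxs x (Finset.mem_univ _)
    have := (div_le_div_iff₀ (h₂ xs) (h₂ x)).1 this
    calc r * f₂ x = f₁ xs / f₂ xs * f₂ x := rfl
      _ ≤ f₁ x := by
        rw [div_mul_eq_mul_div, div_le_iff₀ (h₂ xs)]
        linarith [this]
  have key : T (fun y => r * f₂ y) xs ≤ f₁ xs := by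
    have := hmono (fun y => r * f₂ y) f₁ (fun x => (mul_pos hr0 (h₂ x)).le)
      (fun x => (h₁ x).le) hle xs
    rwa [hf₁] at this
  have key2 : r * T f₂ xs < T (fun y => r * f₂ y) xs := hsup r hr0 hr1 f₂ h₂ xs
  rw [hf₂] at key2
  have : f₁ xs = r * f₂ xs := by
    rw [hr, div_mul_cancel₀ _ (h₂ xs).ne']
  linarith

/-- A monotone, strictly superhomogeneous operator on nonnegative functions on a finite
set has at most one strictly positive fixed point. -/
theorem stmt6 {𝕏 : Type*} [Fintype 𝕏]
    (T : (𝕏 → ℝ) → (𝕏 → ℝ))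
    (hmono : ∀ f g : 𝕏 → ℝ, (∀ x, 0 ≤ f x) → (∀ x, 0 ≤ g x) →
      (∀ x, f x ≤ g x) → ∀ x, T f x ≤ T g x)
    (hsup : ∀ r : ℝ, 0 < r → r < 1 → ∀ f : 𝕏 → ℝ, (∀ x, 0 < f x) →
      ∀ x, r * T f x < T (fun y => r * f y) x)
    (f₁ f₂ : 𝕏 → ℝ) (h₁ : ∀ x, 0 < f₁ x) (h₂ : ∀ x, 0 < f₂ x)
    (hf₁ : T f₁ = f₁) (hf₂ : T f₂ = f₂) : f₁ = f₂ := by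
  funext x
  exact le_antisymm (stmt6aux T hmono hsup f₂ f₁ h₂ h₁ hf₂ hf₁ x)
    (stmt6aux T hmono hsup f₁ f₂ h₁ h₂ hf₁ hf₂ x)
end

section
/- Let 𝕏 be a finite set and T a monotone, concave operator on a convex subset D of the nonnegative functions on 𝕏 (T(λf+(1−λ)g) ≥ λTf + (1−λ)Tg for λ∈[0,1]). Suppose f₀ ∈ D satisfies T^m f₀ > f₀ pointwise for some m ≥ 1, and every fixed point of T dominates f₀. Then T has at most one fixed point f* in D with f* > f₀, and any such fixed point satisfies f* > f₀ pointwise. -/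
/-- A monotone concave operator `T` on a convex set `D` of nonnegative functions on a
finite set, with `T^m f₀ > f₀` for some `m ≥ 1` and every fixed point dominating `f₀`,
has at most one fixed point in `D`, and every fixed point strictly dominates `f₀`. -/
theorem stmt7 {𝕏 : Type*} [Fintype 𝕏]
    (D : Set (𝕏 → ℝ)) (hDnn : ∀ f ∈ D, ∀ x, 0 ≤ f x)
    (hDconv : ∀ f ∈ D, ∀ g ∈ D, ∀ lam : ℝ, 0 ≤ lam → lam ≤ 1 →
      (fun x => lam * f x + (1 - lam) * g x) ∈ D)
    (T : (𝕏 → ℝ) → (𝕏 → ℝ)) (hTD : ∀ f ∈ D, T f ∈ D)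
    (hmono : ∀ f ∈ D, ∀ g ∈ D, (∀ x, f x ≤ g x) → ∀ x, T f x ≤ T g x)
    (hconc : ∀ f ∈ D, ∀ g ∈ D, ∀ lam : ℝ, 0 ≤ lam → lam ≤ 1 →
      ∀ x, lam * T f x + (1 - lam) * T g x ≤ T (fun y => lam * f y + (1 - lam) * g y) x)
    (f₀ : 𝕏 → ℝ) (hf₀ : f₀ ∈ D)
    (m : ℕ) (hm : 1 ≤ m) (hTm : ∀ x, f₀ x < T^[m] f₀ x)
    (hdom : ∀ f ∈ D, T f = f → ∀ x, f₀ x ≤ f x) :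
    (∀ f ∈ D, T f = f → ∀ x, f₀ x < f x) ∧
      ∀ f₁ ∈ D, ∀ f₂ ∈ D, T f₁ = f₁ → T f₂ = f₂ → f₁ = f₂ := by
  have hD_iter : ∀ n, ∀ f ∈ D, T^[n] f ∈ D := by
    intro n
    induction n with
    | zero => intro f hf; simpa using hf
    | succ n ih =>
      intro f hf
      rw [Function.iterate_succ_apply']
      exact hTD _ (ih f hf)
  have hmono_iter : ∀ n, ∀ f ∈ D, ∀ g ∈ D, (∀ x, f x ≤ g x) →
      ∀ x, T^[n] f x ≤ T^[n] g x := by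
    intro n
    induction n with
    | zero => intro f _ g _ h x; simpa using h x
    | succ n ih =>
      intro f hf g hg h x
      rw [Function.iterate_succ_apply', Function.iterate_succ_apply']
      exact hmono _ (hD_iter n f hf) _ (hD_iter n g hg) (ih f hf g hg h) x
  have hconc_iter : ∀ n, ∀ f ∈ D, ∀ g ∈ D, ∀ lam : ℝ, 0 ≤ lam → lam ≤ 1 →
      ∀ x, lam * T^[n] f x + (1 - lam) * T^[n] g x ≤
        T^[n] (fun y => lam * f y + (1 - lam) * g y) x := by
    intro n
    induction n with
    | zero => intro f _ g _ lam _ _ x; simp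
    | succ n ih =>
      intro f hf g hg lam h0 h1 x
      rw [Function.iterate_succ_apply', Function.iterate_succ_apply',
        Function.iterate_succ_apply']
      have h2 : T (fun y => lam * T^[n] f y + (1 - lam) * T^[n] g y) x ≤
          T (T^[n] (fun y => lam * f y + (1 - lam) * g y)) x :=
        hmono _ (hDconv _ (hD_iter n f hf) _ (hD_iter n g hg) lam h0 h1) _
          (hD_iter n _ (hDconv f hf g hg lam h0 h1)) (ih f hf g hg lam h0 h1) x
      exact le_trans (hconc _ (hD_iter n f hf) _ (hD_iter n g hg) lam h0 h1 x) h2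
  have part1 : ∀ f ∈ D, T f = f → ∀ x, f₀ x < f x := by
    intro f hf hfix x
    have hfix' : T^[m] f = f := Function.iterate_fixed hfix m
    calc f₀ x < T^[m] f₀ x := hTm x
      _ ≤ T^[m] f x := hmono_iter m f₀ hf₀ f hf (hdom f hf hfix) x
      _ = f x := by rw [hfix']
  refine ⟨part1, ?_⟩
  have key : ∀ f₁ ∈ D, ∀ f₂ ∈ D, T f₁ = f₁ → T f₂ = f₂ → ∀ x, f₂ x ≤ f₁ x := by
    intro f₁ hf₁ f₂ hf₂ hfix₁ hfix₂
    by_contra hcon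
    push_neg at hcon
    obtain ⟨x0, hx0⟩ := hcon
    haveI hne : Nonempty 𝕏 := ⟨x0⟩
    have hd : ∀ x, 0 < f₂ x - f₀ x := fun x => sub_pos.mpr (part1 f₂ hf₂ hfix₂ x)
    have hn : ∀ x, 0 < f₁ x - f₀ x := fun x => sub_pos.mpr (part1 f₁ hf₁ hfix₁ x)
    set q : 𝕏 → ℝ := fun x => (f₁ x - f₀ x) / (f₂ x - f₀ x) with hq
    obtain ⟨xs, -, hxs⟩ := Finset.exists_mem_eq_inf' (Finset.univ_nonempty (α := 𝕏)) q
    set r : ℝ := Finset.univ.inf' Finset.univ_nonempty q with hr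
    have hrle : ∀ x, r ≤ q x := fun x => Finset.inf'_le q (Finset.mem_univ x)
    have hr0 : 0 < r := by
      rw [hxs]; exact div_pos (hn xs) (hd xs)
    have hq0 : q x0 < 1 := (div_lt_one (hd x0)).mpr (by linarith [hx0])
    have hr1 : r < 1 := lt_of_le_of_lt (hrle x0) hq0
    have hfD : (fun x => r * f₂ x + (1 - r) * f₀ x) ∈ D :=
      hDconv f₂ hf₂ f₀ hf₀ r hr0.le hr1.le
    have hle : ∀ x, r * f₂ x + (1 - r) * f₀ x ≤ f₁ x := by
      intro x
      have h1 : r * (f₂ x - f₀ x) ≤ q x * (f₂ x - f₀ x) :=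
        mul_le_mul_of_nonneg_right (hrle x) (hd x).le
      have h2 : q x * (f₂ x - f₀ x) = f₁ x - f₀ x := div_mul_cancel₀ _ (hd x).ne'
      have h3 : r * f₂ x + (1 - r) * f₀ x - f₀ x = r * (f₂ x - f₀ x) := by ring
      linarith
    have heq : r * f₂ xs + (1 - r) * f₀ xs = f₁ xs := by
      have h2 : r * (f₂ xs - f₀ xs) = f₁ xs - f₀ xs := by
        rw [hxs]; exact div_mul_cancel₀ _ (hd xs).ne'
      have h3 : r * f₂ xs + (1 - r) * f₀ xs - f₀ xs = r * (f₂ xs - f₀ xs) := by ring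
      linarith
    have hgt : r * f₂ xs + (1 - r) * f₀ xs <
        T^[m] (fun x => r * f₂ x + (1 - r) * f₀ x) xs := by
      have h1 : r * T^[m] f₂ xs + (1 - r) * T^[m] f₀ xs ≤
          T^[m] (fun x => r * f₂ x + (1 - r) * f₀ x) xs :=
        hconc_iter m f₂ hf₂ f₀ hf₀ r hr0.le hr1.le xs
      have h2 : T^[m] f₂ = f₂ := Function.iterate_fixed hfix₂ m
      have h3 : (1 - r) * f₀ xs < (1 - r) * T^[m] f₀ xs :=
        mul_lt_mul_of_pos_left (hTm xs) (by linarith)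
      rw [h2] at h1
      linarith
    have hle2 : T^[m] (fun x => r * f₂ x + (1 - r) * f₀ x) xs ≤ f₁ xs := by
      have h := hmono_iter m _ hfD f₁ hf₁ hle xs
      rwa [Function.iterate_fixed hfix₁ m] at h
    linarith
  intro f₁ hf₁ f₂ hf₂ hfix₁ hfix₂
  funext x
  exact le_antisymm (key f₂ hf₂ f₁ hf₁ hfix₂ hfix₁ x) (key f₁ hf₁ f₂ hf₂ hfix₁ hfix₂ x)
end

section
/- Let 𝕏 be a finite set, T a monotone operator on strictly positive functions on 𝕏 with a unique fixed point f* in that set, and suppose T is subhomogeneous on [1,∞)-scalings: T(rf*) ≤ r f* and T((1/r)f*) ≥ (1/r) f* for all r ≥ 1. Then for every strictly positive f, the iterates Tⁿf converge pointwise to f* as n→∞. -/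
open Filter Topology

/-- For a monotone, continuous operator on strictly positive functions on a finite set
with a unique strictly positive fixed point `f*` and the subhomogeneity properties
`T(r f*) ≤ r f*` and `T((1/r) f*) ≥ (1/r) f*` for `r ≥ 1`, the iterates `Tⁿ f`
converge pointwise to `f*` from any strictly positive starting point `f`. -/
theorem stmt8 {𝕏 : Type*} [Fintype 𝕏] [Nonempty 𝕏]
    (T : (𝕏 → ℝ) → (𝕏 → ℝ))
    (hpos : ∀ f : 𝕏 → ℝ, (∀ x, 0 < f x) → ∀ x, 0 < T f x)
    (hmono : ∀ f g : 𝕏 → ℝ, (∀ x, 0 < f x) → (∀ x, 0 < g x) →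
      (∀ x, f x ≤ g x) → ∀ x, T f x ≤ T g x)
    (hcont : ∀ (s : ℕ → 𝕏 → ℝ) (h : 𝕏 → ℝ), (∀ n x, 0 < s n x) → (∀ x, 0 < h x) →
      (∀ x, Tendsto (fun n => s n x) atTop (𝓝 (h x))) →
      ∀ x, Tendsto (fun n => T (s n) x) atTop (𝓝 (T h x)))
    (fstar : 𝕏 → ℝ) (hfs : ∀ x, 0 < fstar x) (hfix : T fstar = fstar)
    (huniq : ∀ g : 𝕏 → ℝ, (∀ x, 0 < g x) → T g = g → g = fstar)
    (hsub : ∀ r : ℝ, 1 ≤ r →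
      (∀ x, T (fun y => r * fstar y) x ≤ r * fstar x) ∧
      (∀ x, r⁻¹ * fstar x ≤ T (fun y => r⁻¹ * fstar y) x)) :
    ∀ f : 𝕏 → ℝ, (∀ x, 0 < f x) →
      ∀ x, Tendsto (fun n => T^[n] f x) atTop (𝓝 (fstar x)) := by
  -- basic iterate lemmas
  have iterpos : ∀ (g : 𝕏 → ℝ), (∀ x, 0 < g x) → ∀ n x, 0 < T^[n] g x := by
    intro g hg n
    induction n with
    | zero => simpa using hg
    | succ n ih =>
      intro x
      rw [Function.iterate_succ_apply']
      exact hpos _ ih x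
  have itermono : ∀ (g h : 𝕏 → ℝ), (∀ x, 0 < g x) → (∀ x, 0 < h x) →
      (∀ x, g x ≤ h x) → ∀ n x, T^[n] g x ≤ T^[n] h x := by
    intro g h hg hh hle n
    induction n with
    | zero => simpa using hle
    | succ n ih =>
      intro x
      rw [Function.iterate_succ_apply', Function.iterate_succ_apply']
      exact hmono _ _ (iterpos g hg n) (iterpos h hh n) ih x
  intro f hf
  -- choose r
  set r : ℝ := max (Finset.univ.sup' Finset.univ_nonempty
      (fun x => max (f x / fstar x) (fstar x / f x))) 1 with hr_def
  have hr1 : 1 ≤ r := le_max_right _ _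
  have hr0 : 0 < r := lt_of_lt_of_le one_pos hr1
  have hA : ∀ x, f x / fstar x ≤ r := fun x =>
    le_trans (le_trans (le_max_left _ _)
      (Finset.le_sup' (fun x => max (f x / fstar x) (fstar x / f x)) (Finset.mem_univ x)))
      (le_max_left _ _)
  have hB : ∀ x, fstar x / f x ≤ r := fun x =>
    le_trans (le_trans (le_max_right _ _)
      (Finset.le_sup' (fun x => max (f x / fstar x) (fstar x / f x)) (Finset.mem_univ x)))
      (le_max_left _ _)
  have hfle : ∀ x, f x ≤ r * fstar x := by
    intro x
    have := (div_le_iff₀ (hfs x)).mp (hA x)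
    linarith [this]
  have hlef : ∀ x, r⁻¹ * fstar x ≤ f x := by
    intro x
    have h1 : fstar x ≤ r * f x := by
      have := (div_le_iff₀ (hf x)).mp (hB x)
      linarith [this]
    rw [inv_mul_le_iff₀ hr0]
    exact h1
  -- upper and lower sequences
  set U : 𝕏 → ℝ := fun y => r * fstar y with hU_def
  set L : 𝕏 → ℝ := fun y => r⁻¹ * fstar y with hL_def
  have hUpos : ∀ x, 0 < U x := fun x => mul_pos hr0 (hfs x)
  have hLpos : ∀ x, 0 < L x := fun x => mul_pos (inv_pos.mpr hr0) (hfs x)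
  have hLU : ∀ x, L x ≤ U x := by
    intro x
    have : r⁻¹ ≤ r := le_trans (inv_le_one_of_one_le₀ hr1) hr1
    exact mul_le_mul_of_nonneg_right this (hfs x).le
  set u : ℕ → 𝕏 → ℝ := fun n => T^[n] U with hu_def
  set l : ℕ → 𝕏 → ℝ := fun n => T^[n] L with hl_def
  have hupos : ∀ n x, 0 < u n x := fun n x => iterpos U hUpos n x
  have hlpos : ∀ n x, 0 < l n x := fun n x => iterpos L hLpos n x
  have hTU : ∀ x, T U x ≤ U x := (hsub r hr1).1
  have hTL : ∀ x, L x ≤ T L x := (hsub r hr1).2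
  have hu_anti : ∀ x, Antitone fun n => u n x := by
    intro x
    apply antitone_nat_of_succ_le
    intro n
    have : ∀ y, T^[n] (T U) y ≤ T^[n] U y :=
      itermono (T U) U (hpos U hUpos) hUpos hTU n
    simpa [hu_def, Function.iterate_succ_apply] using this x
  have hl_mono : ∀ x, Monotone fun n => l n x := by
    intro x
    apply monotone_nat_of_le_succ
    intro n
    have : ∀ y, T^[n] L y ≤ T^[n] (T L) y :=
      itermono L (T L) hLpos (hpos L hLpos) hTL n
    simpa [hl_def, Function.iterate_succ_apply] using this x
  have hlu : ∀ n x, l n x ≤ u n x := itermono L U hLpos hUpos hLU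
  have hlowbd : ∀ n x, L x ≤ u n x := fun n x =>
    le_trans (le_trans (by simp [hl_def]) (hl_mono x (Nat.zero_le n))) (hlu n x)
  have hupbd : ∀ n x, l n x ≤ U x := fun n x =>
    le_trans (hlu n x) (le_trans (hu_anti x (Nat.zero_le n)) (by simp [hu_def]))
  -- limits
  set gU : 𝕏 → ℝ := fun x => ⨅ n, u n x with hgU_def
  set gL : 𝕏 → ℝ := fun x => ⨆ n, l n x with hgL_def
  have hbbU : ∀ x, BddBelow (Set.range fun n => u n x) := by
    intro x
    exact ⟨L x, by rintro y ⟨n, rfl⟩; exact hlowbd n x⟩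
  have hbaL : ∀ x, BddAbove (Set.range fun n => l n x) := by
    intro x
    exact ⟨U x, by rintro y ⟨n, rfl⟩; exact hupbd n x⟩
  have htU : ∀ x, Tendsto (fun n => u n x) atTop (𝓝 (gU x)) := fun x =>
    tendsto_atTop_ciInf (hu_anti x) (hbbU x)
  have htL : ∀ x, Tendsto (fun n => l n x) atTop (𝓝 (gL x)) := fun x =>
    tendsto_atTop_ciSup (hl_mono x) (hbaL x)
  have hgUpos : ∀ x, 0 < gU x := fun x =>
    lt_of_lt_of_le (hLpos x) (le_ciInf fun n => hlowbd n x)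
  have hgLpos : ∀ x, 0 < gL x := fun x =>
    lt_of_lt_of_le (hlpos 0 x) (le_ciSup (hbaL x) 0)
  -- fixed point property via continuity
  have hfixU : T gU = gU := by
    funext x
    have h1 : Tendsto (fun n => T (u n) x) atTop (𝓝 (T gU x)) :=
      hcont u gU hupos hgUpos htU x
    have h2 : Tendsto (fun n => u (n + 1) x) atTop (𝓝 (gU x)) :=
      (htU x).comp (tendsto_add_atTop_nat 1)
    have h3 : (fun n => T (u n) x) = fun n => u (n + 1) x := by
      funext n
      simp [hu_def, Function.iterate_succ_apply']
    rw [h3] at h1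
    exact tendsto_nhds_unique h1 h2
  have hfixL : T gL = gL := by
    funext x
    have h1 : Tendsto (fun n => T (l n) x) atTop (𝓝 (T gL x)) :=
      hcont l gL hlpos hgLpos htL x
    have h2 : Tendsto (fun n => l (n + 1) x) atTop (𝓝 (gL x)) :=
      (htL x).comp (tendsto_add_atTop_nat 1)
    have h3 : (fun n => T (l n) x) = fun n => l (n + 1) x := by
      funext n
      simp [hl_def, Function.iterate_succ_apply']
    rw [h3] at h1
    exact tendsto_nhds_unique h1 h2
  have hgU_eq : gU = fstar := huniq gU hgUpos hfixU
  have hgL_eq : gL = fstar := huniq gL hgLpos hfixL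
  -- squeeze
  intro x
  have hlow : ∀ n, l n x ≤ T^[n] f x := fun n => itermono L f hLpos hf hlef n x
  have hhigh : ∀ n, T^[n] f x ≤ u n x := fun n => itermono f U hf hUpos hfle n x
  have h1 : Tendsto (fun n => l n x) atTop (𝓝 (fstar x)) := by
    rw [← hgL_eq]; exact htL x
  have h2 : Tendsto (fun n => u n x) atTop (𝓝 (fstar x)) := by
    rw [← hgU_eq]; exact htU x
  exact tendsto_of_tendsto_of_tendsto_of_le_of_le h1 h2 hlow hhigh
end

section
/- Let 0<β<1, δ>0, ϖ<0 with βδ^{1-ρ}<1 and ρ≥1, and define T(f) = H(1, δf + ϖ) on the domain [−ϖ/δ, ∞), where H(1,z) = ((1−β) + β z^{1-ρ})^{1/(1-ρ)} for ρ>1 (with H(1,0)=0) and H(1,z) = e^{β ln z} = z^β for ρ=1 (with H(1,0)=0). Then T(−ϖ/δ) = 0 < −ϖ/δ, T is strictly increasing and concave on its domain, lim_{f↓−ϖ/δ} T'(f) = +∞ when ρ≤1 and = (βδ^{1-ρ})^{1/(1-ρ)} when ρ>1, and lim_{f→∞} T'(f) = (βδ^{1-ρ})^{1/(1-ρ)}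 < 1 when ρ<1 and = 0 when ρ≥1. -/
open Filter Topology Set

/-!
`T` is `H(1, ·)` precomposed with the increasing affine map `f ↦ δ f + ϖ`, which sends
`-ϖ/δ` to `0`; so monotonicity and concavity of `T` on `[-ϖ/δ, ∞)` are those of `H(1, ·)` on
`[0, ∞)`, and `T'(f) = δ H'(δ f + ϖ)`. For `ρ = 1`, `H(1, z) = z ^ β`. For `ρ > 1`, pulling
`z ^ (1 - ρ)` out of the bracket gives `H(1, z) = z ((1 - β) z ^ (ρ - 1) + β) ^ (1 / (1 - ρ))`,
which is continuous at `0` and has derivative `β ((1 - β) z ^ (ρ - 1) + β) ^ (ρ / (1 - ρ))`: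
positive, decreasing, equal to `β ^ (1 / (1 - ρ))` at `0` and tending to `0` at `∞`.
Finally `δ β ^ (1 / (1 - ρ)) = (β δ ^ (1 - ρ)) ^ (1 / (1 - ρ))`.
-/

/-- The single-state recursive utility map `T(f) = H(1, δ f + ϖ)`, with `H(1,z)` the CES
aggregator extended by continuity by `H(1,0) = 0` (case `ρ ≥ 1`). -/
noncomputable def T9 (β ρ δ ϖ : ℝ) (f : ℝ) : ℝ :=
  if ρ = 1 then (δ * f + ϖ) ^ β
  else if δ * f + ϖ = 0 then 0
  else ((1 - β) + β * (δ * f + ϖ) ^ (1 - ρ)) ^ (1 / (1 - ρ))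

noncomputable def cesAggregator (β ρ z : ℝ) : ℝ :=
  if ρ = 1 then z ^ β
  else if z = 0 then 0
  else ((1 - β) + β * z ^ (1 - ρ)) ^ (1 / (1 - ρ))

theorem T9_eq_cesAggregator_comp (β ρ δ ϖ : ℝ) :
    T9 β ρ δ ϖ = fun f => cesAggregator β ρ (δ * f + ϖ) := rfl

section AffineReparametrization

variable {H : ℝ → ℝ} {δ ϖ c : ℝ}

theorem preimage_mul_add_Ici_zero (hδ : 0 < δ) (hc : δ * c + ϖ = 0) :
    (fun f => δ * f + ϖ) ⁻¹' Ici 0 = Ici c := by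
  ext f
  simp only [mem_preimage, mem_Ici]
  constructor <;> intro h <;> nlinarith

theorem StrictMonoOn.comp_mul_add (hH : StrictMonoOn H (Ici 0)) (hδ : 0 < δ)
    (hc : δ * c + ϖ = 0) : StrictMonoOn (fun f => H (δ * f + ϖ)) (Ici c) := by
  rw [← preimage_mul_add_Ici_zero hδ hc]
  exact hH.comp (((strictMono_mul_left_of_pos hδ).add_const ϖ).strictMonoOn _)
    (mapsTo_preimage _ _)

theorem ConcaveOn.comp_mul_add (hH : ConcaveOn ℝ (Ici 0) H) (hδ : 0 < δ)
    (hc : δ * c + ϖ = 0) : ConcaveOn ℝ (Ici c) (fun f => H (δ * f + ϖ)) := by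
  rw [← preimage_mul_add_Ici_zero hδ hc]
  exact hH.comp_affineMap (δ • AffineMap.id ℝ ℝ + AffineMap.const ℝ ℝ ϖ)

theorem deriv_comp_mul_add (H : ℝ → ℝ) (δ ϖ : ℝ) :
    deriv (fun f => H (δ * f + ϖ)) = fun x => δ * deriv H (δ * x + ϖ) := by
  funext x
  rw [deriv_comp_mul_left δ (fun y => H (y + ϖ)) x, deriv_comp_add_const, smul_eq_mul]

theorem tendsto_mul_add_nhdsGT (hδ : 0 < δ) (hc : δ * c + ϖ = 0) :
    Tendsto (fun f => δ * f + ϖ) (𝓝[>] c) (𝓝[>] 0) := by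
  rw [← hc]
  exact (by fun_prop : Continuous fun f => δ * f + ϖ).continuousWithinAt.tendsto_nhdsWithin
    fun f (hf : c < f) => show δ * c + ϖ < δ * f + ϖ by nlinarith

theorem tendsto_mul_add_atTop (hδ : 0 < δ) :
    Tendsto (fun f => δ * f + ϖ) atTop atTop :=
  tendsto_atTop_add_const_right _ ϖ (tendsto_id.const_mul_atTop hδ)

end AffineReparametrization

namespace cesAggregator

variable {β ρ z : ℝ}

theorem apply_zero (hβ0 : 0 < β) : cesAggregator β ρ 0 = 0 := by
  by_cases hρ : ρ = 1 <;> simp [cesAggregator, hρ, Real.zero_rpow hβ0.ne']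

theorem eq_rpow_of_eq_one : cesAggregator β 1 = fun z => z ^ β := by
  funext z; simp [cesAggregator]

theorem eq_mul_rpow (hβ0 : 0 ≤ β) (hβ1 : β ≤ 1) (hρ : 1 < ρ) (hz : 0 ≤ z) :
    cesAggregator β ρ z = z * ((1 - β) * z ^ (ρ - 1) + β) ^ (1 / (1 - ρ)) := by
  rw [cesAggregator, if_neg hρ.ne']
  rcases hz.eq_or_lt with rfl | hz
  · simp
  have hρ' : 1 - ρ ≠ 0 := by linarith
  have hsplit : (1 - β) + β * z ^ (1 - ρ) = z ^ (1 - ρ) * ((1 - β) * z ^ (ρ - 1) + β) := by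
    rw [mul_add, mul_left_comm, ← Real.rpow_add hz]
    norm_num
    ring
  rw [if_neg hz.ne', hsplit, Real.mul_rpow (by positivity) (by positivity), ← Real.rpow_mul hz.le,
    mul_one_div_cancel hρ', Real.rpow_one]

theorem continuousOn (hβ0 : 0 < β) (hβ1 : β ≤ 1) (hρ : 1 < ρ) :
    ContinuousOn (cesAggregator β ρ) (Ici 0) := by
  refine ContinuousOn.congr ?_ fun z hz => eq_mul_rpow hβ0.le hβ1 hρ hz
  refine continuousOn_id.mul (ContinuousOn.rpow_const ?_ fun z hz => Or.inl ?_)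
  · exact (continuousOn_const.mul (continuousOn_id.rpow_const fun _ _ => Or.inr (by linarith))).add
      continuousOn_const
  · have : 0 ≤ (1 - β) * z ^ (ρ - 1) := mul_nonneg (by linarith) (Real.rpow_nonneg hz _)
    positivity

theorem hasDerivAt (hβ0 : 0 < β) (hβ1 : β ≤ 1) (hρ : 1 < ρ) (hz : 0 < z) :
    HasDerivAt (cesAggregator β ρ) (β * ((1 - β) * z ^ (ρ - 1) + β) ^ (ρ / (1 - ρ))) z := by
  set u := (1 - β) * z ^ (ρ - 1) + β with hu
  have hu_pos : 0 < u := by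
    have : 0 ≤ (1 - β) * z ^ (ρ - 1) := mul_nonneg (by linarith) (Real.rpow_nonneg hz.le _)
    linarith
  have hinner : HasDerivAt (fun z => (1 - β) * z ^ (ρ - 1) + β)
      ((1 - β) * ((ρ - 1) * z ^ (ρ - 1 - 1))) z :=
    ((Real.hasDerivAt_rpow_const (Or.inl hz.ne')).const_mul _).add_const _
  have hprod := (hasDerivAt_id z).mul
    ((Real.hasDerivAt_rpow_const (p := 1 / (1 - ρ)) (Or.inl hu_pos.ne')).comp z hinner)
  have heq : cesAggregator β ρ =ᶠ[𝓝 z]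
      fun z => z * ((1 - β) * z ^ (ρ - 1) + β) ^ (1 / (1 - ρ)) := by
    filter_upwards [Ioi_mem_nhds hz] with w hw using eq_mul_rpow hβ0.le hβ1 hρ (le_of_lt hw)
  refine (hprod.congr_of_eventuallyEq heq).congr_deriv ?_
  have hρ' : 1 - ρ ≠ 0 := by linarith
  have hexp : 1 / (1 - ρ) = ρ / (1 - ρ) + 1 := by field_simp; ring
  have hzpow : z * z ^ (ρ - 1 - 1) = z ^ (ρ - 1) := by
    rw [Real.rpow_sub_one hz.ne', mul_div_cancel₀ _ hz.ne']
  simp only [id, Function.comp_apply, ← hu]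
  rw [hexp, add_sub_cancel_right, Real.rpow_add hu_pos, Real.rpow_one]
  have hcoef : (ρ / (1 - ρ) + 1) * (ρ - 1) = -1 := by field_simp; ring
  linear_combination u ^ (ρ / (1 - ρ)) * hu
    + (1 - β) * u ^ (ρ / (1 - ρ)) * ((ρ / (1 - ρ) + 1) * (ρ - 1)) * hzpow
    + (1 - β) * u ^ (ρ / (1 - ρ)) * z ^ (ρ - 1) * hcoef

theorem deriv_of_pos (hβ0 : 0 < β) (hβ1 : β ≤ 1) (hρ : 1 < ρ) (hz : 0 < z) :
    deriv (cesAggregator β ρ) z = β * ((1 - β) * z ^ (ρ - 1) + β) ^ (ρ / (1 - ρ)) :=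
  (hasDerivAt hβ0 hβ1 hρ hz).deriv

theorem antitoneOn_deriv (hβ0 : 0 < β) (hβ1 : β ≤ 1) (hρ : 1 < ρ) :
    AntitoneOn (deriv (cesAggregator β ρ)) (Ioi 0) := by
  intro x (hx : 0 < x) y (hy : 0 < y) hxy
  rw [deriv_of_pos hβ0 hβ1 hρ hx, deriv_of_pos hβ0 hβ1 hρ hy]
  have hx' : 0 ≤ (1 - β) * x ^ (ρ - 1) := mul_nonneg (by linarith) (Real.rpow_nonneg hx.le _)
  gcongr ?_ * ?_
  exact Real.rpow_le_rpow_of_nonpos (by linarith) (by gcongr)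
    (div_nonpos_of_nonneg_of_nonpos (by linarith) (by linarith))

theorem strictMonoOn (hβ0 : 0 < β) (hβ1 : β < 1) (hρ : 1 ≤ ρ) :
    StrictMonoOn (cesAggregator β ρ) (Ici 0) := by
  rcases hρ.eq_or_lt with rfl | hρ
  · rw [eq_rpow_of_eq_one]
    exact Real.strictMonoOn_rpow_Ici_of_exponent_pos hβ0
  refine strictMonoOn_of_deriv_pos (convex_Ici 0) (continuousOn hβ0 hβ1.le hρ) fun z hz => ?_
  rw [interior_Ici] at hz
  rw [deriv_of_pos hβ0 hβ1.le hρ hz]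
  have : 0 ≤ (1 - β) * z ^ (ρ - 1) := mul_nonneg (by linarith) (Real.rpow_nonneg hz.le _)
  positivity

theorem concaveOn (hβ0 : 0 < β) (hβ1 : β < 1) (hρ : 1 ≤ ρ) :
    ConcaveOn ℝ (Ici 0) (cesAggregator β ρ) := by
  rcases hρ.eq_or_lt with rfl | hρ
  · rw [eq_rpow_of_eq_one]
    exact (Real.strictConcaveOn_rpow hβ0 hβ1).concaveOn
  refine AntitoneOn.concaveOn_of_deriv (convex_Ici 0) (continuousOn hβ0 hβ1.le hρ) ?_ ?_ <;>
    rw [interior_Ici]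
  · exact fun z hz => (hasDerivAt hβ0 hβ1.le hρ hz).differentiableAt.differentiableWithinAt
  · exact antitoneOn_deriv hβ0 hβ1.le hρ

theorem tendsto_deriv_nhdsGT_zero_of_eq_one (hβ0 : 0 < β) (hβ1 : β < 1) :
    Tendsto (deriv (cesAggregator β 1)) (𝓝[>] 0) atTop := by
  rw [eq_rpow_of_eq_one, Real.deriv_rpow_const']
  exact (tendsto_rpow_neg_nhdsGT_zero (by linarith)).const_mul_atTop hβ0

theorem tendsto_deriv_nhdsGT_zero (hβ0 : 0 < β) (hβ1 : β ≤ 1) (hρ : 1 < ρ) :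
    Tendsto (deriv (cesAggregator β ρ)) (𝓝[>] 0) (𝓝 (β ^ (1 / (1 - ρ)))) := by
  have hbase : (1 - β) * (0 : ℝ) ^ (ρ - 1) + β = β := by
    rw [Real.zero_rpow (by linarith)]; ring
  have hcont : ContinuousAt (fun z => β * ((1 - β) * z ^ (ρ - 1) + β) ^ (ρ / (1 - ρ))) 0 :=
    continuousAt_const.mul ((continuousAt_const.mul (continuousAt_id.rpow_const
      (Or.inr (by linarith)))).add continuousAt_const |>.rpow_const
        (Or.inl (by simpa only [Pi.add_apply, Pi.mul_apply, id, hbase] using hβ0.ne')))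
  have hlim :
      β * ((1 - β) * (0 : ℝ) ^ (ρ - 1) + β) ^ (ρ / (1 - ρ)) = β ^ (1 / (1 - ρ)) := by
    have hρ' : 1 - ρ ≠ 0 := by linarith
    rw [hbase, show 1 / (1 - ρ) = ρ / (1 - ρ) + 1 by field_simp; ring, Real.rpow_add hβ0,
      Real.rpow_one, mul_comm]
  rw [← hlim]
  refine (hcont.tendsto.mono_left nhdsWithin_le_nhds).congr' ?_
  filter_upwards [self_mem_nhdsWithin] with z hz using (deriv_of_pos hβ0 hβ1 hρ hz).symm

theorem tendsto_deriv_atTop (hβ0 : 0 < β) (hβ1 : β < 1) (hρ : 1 ≤ ρ) :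
    Tendsto (deriv (cesAggregator β ρ)) atTop (𝓝 0) := by
  rcases hρ.eq_or_lt with rfl | hρ
  · rw [eq_rpow_of_eq_one, Real.deriv_rpow_const']
    simpa [neg_sub] using (tendsto_rpow_neg_atTop (y := 1 - β) (by linarith)).const_mul β
  have hinner : Tendsto (fun z => (1 - β) * z ^ (ρ - 1) + β) atTop atTop :=
    tendsto_atTop_add_const_right _ _
      ((tendsto_rpow_atTop (by linarith)).const_mul_atTop (by linarith))
  have houter : Tendsto (fun u : ℝ => u ^ (ρ / (1 - ρ))) atTop (𝓝 0) := by
    simpa [neg_div, ← div_neg] using tendsto_rpow_neg_atTop (y := ρ / (ρ - 1)) (by positivity)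
  have hlim := (houter.comp hinner).const_mul β
  rw [mul_zero] at hlim
  refine hlim.congr' ?_
  filter_upwards [eventually_gt_atTop 0] with z hz using (deriv_of_pos hβ0 hβ1.le hρ hz).symm

end cesAggregator

theorem mul_rpow_rpow_one_div {a b p : ℝ} (ha : 0 ≤ a) (hb : 0 ≤ b) (hp : p ≠ 0) :
    (a * b ^ p) ^ (1 / p) = b * a ^ (1 / p) := by
  rw [Real.mul_rpow ha (Real.rpow_nonneg hb _), ← Real.rpow_mul hb, mul_one_div_cancel hp,
    Real.rpow_one, mul_comm]

theorem stmt9_general (β ρ δ ϖ : ℝ) (hβ0 : 0 < β) (hβ1 : β < 1) (hδ : 0 < δ) (hϖ : ϖ < 0)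
    (hρ : 1 ≤ ρ) :
    T9 β ρ δ ϖ (-ϖ / δ) = 0 ∧ 0 < -ϖ / δ ∧
    StrictMonoOn (T9 β ρ δ ϖ) (Ici (-ϖ / δ)) ∧
    ConcaveOn ℝ (Ici (-ϖ / δ)) (T9 β ρ δ ϖ) ∧
    (ρ = 1 → Tendsto (deriv (T9 β ρ δ ϖ)) (𝓝[>] (-ϖ / δ)) atTop) ∧
    (1 < ρ → Tendsto (deriv (T9 β ρ δ ϖ)) (𝓝[>] (-ϖ / δ))
      (𝓝 ((β * δ ^ (1 - ρ)) ^ (1 / (1 - ρ))))) ∧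
    Tendsto (deriv (T9 β ρ δ ϖ)) atTop (𝓝 0) := by
  have hroot : δ * (-ϖ / δ) + ϖ = 0 := by field_simp; ring
  have hright := tendsto_mul_add_nhdsGT hδ hroot
  have htop := tendsto_mul_add_atTop (ϖ := ϖ) hδ
  rw [T9_eq_cesAggregator_comp, deriv_comp_mul_add]
  refine ⟨by simp only [hroot, cesAggregator.apply_zero hβ0], div_pos (neg_pos.2 hϖ) hδ,
    (cesAggregator.strictMonoOn hβ0 hβ1 hρ).comp_mul_add hδ hroot,
    (cesAggregator.concaveOn hβ0 hβ1 hρ).comp_mul_add hδ hroot,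
    fun hρ1 => ?_, fun hρ1 => ?_, ?_⟩
  · subst hρ1
    exact ((cesAggregator.tendsto_deriv_nhdsGT_zero_of_eq_one hβ0 hβ1).comp hright
      ).const_mul_atTop hδ
  · rw [mul_rpow_rpow_one_div hβ0.le hδ.le (by linarith)]
    exact ((cesAggregator.tendsto_deriv_nhdsGT_zero hβ0 hβ1.le hρ1).comp hright).const_mul δ
  · simpa using ((cesAggregator.tendsto_deriv_atTop hβ0 hβ1 hρ).comp htop).const_mul δ

/-- Properties of the single-state operator `T` with negative gain-loss utility `ϖ < 0`
and `ρ ≥ 1`: `T(-ϖ/δ) = 0 < -ϖ/δ`, `T` is strictly increasing and concave on its domain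
`[-ϖ/δ, ∞)`, `T'(f) → +∞` as `f ↓ -ϖ/δ` when `ρ = 1` and `T'(f) → (βδ^(1-ρ))^(1/(1-ρ))`
when `ρ > 1`, and `T'(f) → 0` as `f → ∞`. -/
theorem stmt9 (β ρ δ ϖ : ℝ) (hβ0 : 0 < β) (hβ1 : β < 1) (hδ : 0 < δ) (hϖ : ϖ < 0)
    (hρ : 1 ≤ ρ) (hgrow : β * δ ^ (1 - ρ) < 1) :
    T9 β ρ δ ϖ (-ϖ / δ) = 0 ∧ 0 < -ϖ / δ ∧
    StrictMonoOn (T9 β ρ δ ϖ) (Ici (-ϖ / δ)) ∧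
    ConcaveOn ℝ (Ici (-ϖ / δ)) (T9 β ρ δ ϖ) ∧
    (ρ = 1 → Tendsto (deriv (T9 β ρ δ ϖ)) (𝓝[>] (-ϖ / δ)) atTop) ∧
    (1 < ρ → Tendsto (deriv (T9 β ρ δ ϖ)) (𝓝[>] (-ϖ / δ))
      (𝓝 ((β * δ ^ (1 - ρ)) ^ (1 / (1 - ρ))))) ∧
    Tendsto (deriv (T9 β ρ δ ϖ)) atTop (𝓝 0) :=
  stmt9_general β ρ δ ϖ hβ0 hβ1 hδ hϖ hρ
end

section
/- Let 0<β<1, δ>0, ϖ<0, 0<ρ<1, with βδ^{1-ρ}<1, and define T(f) = ((1−β) + β(δf+ϖ)^{1-ρ})^{1/(1-ρ)} on [−ϖ/δ, ∞). If (1−β)^{1/(1-ρ)} > −ϖ/δ, then T has a unique fixed point in [−ϖ/δ, ∞). -/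
/-!
Write `p = 1 - ρ`, so the map is `f ↦ M(δ f + ϖ)` where `M u = ((1 - β) + β u^p)^(1/p)` is a
weighted power mean of `1` and `u`. Since `p < 1`, `M` is concave on `[0, ∞)`: its derivative
`β ((1 - β) u^(-p) + β)^(1/p - 1)` decreases. Hence the map is concave on `[-ϖ/δ, ∞)`. It lies
above the diagonal at `-ϖ/δ` by hypothesis and below it far out, because `βδ^p < 1`; the
intermediate value theorem gives a fixed point. A concave map that starts above the diagonal
meets it at most once, since a second crossing would put a point of the graph below the chord.
-/

open Real Set Filter Function

noncomputable def powerMean (β p u : ℝ) : ℝ := ((1 - β) + β * u ^ p) ^ (1 / p)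

section PowerMean

variable {β p δ ϖ : ℝ}

lemma hasDerivAt_powerMean (hβ0 : 0 ≤ β) (hβ1 : β < 1) (hp : 0 < p) {u : ℝ} (hu : 0 < u) :
    HasDerivAt (powerMean β p) (β * ((1 - β) / u ^ p + β) ^ (1 / p - 1)) u := by
  have hup : 0 < u ^ p := rpow_pos_of_pos hu p
  have hw : 0 < (1 - β) + β * u ^ p := by
    have : 0 < 1 - β := by linarith
    positivity
  have h := (((hasDerivAt_id u).rpow_const (p := p) (Or.inl hu.ne')).const_mul β
    |>.const_add (1 - β)).rpow_const (p := 1 / p) (Or.inl hw.ne')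
  refine h.congr_deriv ?_
  have hq : p * (1 / p - 1) = 1 - p := by field_simp
  rw [div_add' _ _ _ hup.ne', div_rpow hw.le hup.le, ← rpow_mul hu.le, hq, rpow_sub hu,
    rpow_one, id, rpow_sub_one hu.ne']
  field_simp

lemma continuous_powerMean (hp : 0 < p) : Continuous (powerMean β p) :=
  ((continuous_id.rpow_const fun _ => Or.inr hp.le).const_smul β |>.const_add (1 - β))
    |>.rpow_const fun _ => Or.inr (by positivity)

lemma concaveOn_powerMean (hβ0 : 0 ≤ β) (hβ1 : β < 1) (hp : 0 < p) (hp1 : p ≤ 1) :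
    ConcaveOn ℝ (Ici 0) (powerMean β p) := by
  refine AntitoneOn.concaveOn_of_deriv (convex_Ici 0)
    (continuous_powerMean hp).continuousOn ?_ ?_ <;> rw [interior_Ici]
  · exact fun u hu => (hasDerivAt_powerMean hβ0 hβ1 hp hu).differentiableAt.differentiableWithinAt
  · intro u (hu : 0 < u) v (hv : 0 < v) huv
    rw [(hasDerivAt_powerMean hβ0 hβ1 hp hu).deriv, (hasDerivAt_powerMean hβ0 hβ1 hp hv).deriv]
    have hq : 0 ≤ 1 / p - 1 := by rw [sub_nonneg, le_div_iff₀ hp]; linarith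
    gcongr

lemma concaveOn_powerMean_comp (hβ0 : 0 ≤ β) (hβ1 : β < 1) (hp : 0 < p) (hp1 : p ≤ 1)
    (hδ : 0 < δ) : ConcaveOn ℝ (Ici (-ϖ / δ)) fun f => powerMean β p (δ * f + ϖ) := by
  have h := (concaveOn_powerMean hβ0 hβ1 hp hp1).comp_affineMap
    ((δ • LinearMap.id : ℝ →ₗ[ℝ] ℝ).toAffineMap + AffineMap.const ℝ ℝ ϖ)
  have hpre : ((δ • LinearMap.id : ℝ →ₗ[ℝ] ℝ).toAffineMap + AffineMap.const ℝ ℝ ϖ) ⁻¹' Ici 0 =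
      Ici (-ϖ / δ) := by
    ext f
    simp [div_le_iff₀ hδ, neg_le_iff_add_nonneg, mul_comm δ f]
  rwa [hpre] at h

lemma eventually_powerMean_comp_lt (hβ0 : 0 ≤ β) (hβ1 : β ≤ 1) (hp : 0 < p) (hδ : 0 < δ)
    (hϖ : ϖ ≤ 0) (hgrow : β * δ ^ p < 1) :
    ∀ᶠ f in atTop, powerMean β p (δ * f + ϖ) < f := by
  filter_upwards [eventually_ge_atTop (-ϖ / δ),
    (tendsto_rpow_atTop hp).eventually_gt_atTop ((1 - β) / (1 - β * δ ^ p))] with f hf hfp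
  rw [div_le_iff₀ hδ] at hf
  rw [div_lt_iff₀ (by linarith)] at hfp
  have hu : 0 ≤ δ * f + ϖ := by linarith
  have hf0 : 0 ≤ f := by nlinarith
  have hw : 0 ≤ (1 - β) + β * (δ * f + ϖ) ^ p :=
    add_nonneg (by linarith) (mul_nonneg hβ0 (rpow_nonneg hu p))
  rw [powerMean, one_div, rpow_inv_lt_iff_of_pos hw hf0 hp]
  calc (1 - β) + β * (δ * f + ϖ) ^ p ≤ (1 - β) + β * (δ * f) ^ p := by gcongr; linarith
    _ = (1 - β) + β * δ ^ p * f ^ p := by rw [mul_rpow hδ.le hf0]; ring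
    _ < f ^ p := by linarith

end PowerMean

theorem ConcaveOn.subsingleton_Ici_inter_fixedPoints {T : ℝ → ℝ} {a : ℝ}
    (hT : ConcaveOn ℝ (Ici a) T) (ha : a < T a) : (Ici a ∩ fixedPoints T).Subsingleton := by
  suffices h : ∀ y ∈ Ici a ∩ fixedPoints T, ∀ z ∈ Ici a ∩ fixedPoints T, ¬ y < z from
    fun y hy z hz => le_antisymm (not_lt.1 (h z hz y hy)) (not_lt.1 (h y hy z hz))
  rintro y ⟨hay, hy⟩ z ⟨haz, hz⟩ hyz
  have hay : a < y := lt_of_le_of_ne hay (by rintro rfl; exact ha.ne' hy)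
  have hmem : y ∈ openSegment ℝ a z := by rw [openSegment_eq_Ioo (hay.trans hyz)]; exact ⟨hay, hyz⟩
  have := (hT.sub (convexOn_id (convex_Ici a))).lt_right_of_left_lt self_mem_Ici haz hmem
    (by simp only [Pi.sub_apply, id, hy.eq]; linarith)
  simp only [Pi.sub_apply, id, hy.eq, hz.eq, sub_self, lt_self_iff_false] at this

/-- For `0 < ρ < 1`, `ϖ < 0`, `βδ^(1-ρ) < 1`, if `(1-β)^(1/(1-ρ)) > -ϖ/δ`, then
`T(f) = ((1-β) + β (δf+ϖ)^(1-ρ))^(1/(1-ρ))` has a unique fixed point on `[-ϖ/δ, ∞)`. -/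
theorem stmt10 (β ρ δ ϖ : ℝ) (hβ0 : 0 < β) (hβ1 : β < 1) (hδ : 0 < δ) (hϖ : ϖ < 0)
    (hρ0 : 0 < ρ) (hρ1 : ρ < 1) (hgrow : β * δ ^ (1 - ρ) < 1)
    (hcond : -ϖ / δ < (1 - β) ^ (1 / (1 - ρ))) :
    ∃! f : ℝ, f ∈ Set.Ici (-ϖ / δ) ∧
      ((1 - β) + β * (δ * f + ϖ) ^ (1 - ρ)) ^ (1 / (1 - ρ)) = f := by
  have hp : 0 < 1 - ρ := by linarith
  have hstart : -ϖ / δ < powerMean β (1 - ρ) (δ * (-ϖ / δ) + ϖ) := by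
    rwa [mul_div_cancel₀ _ hδ.ne', neg_add_cancel, powerMean, zero_rpow hp.ne', mul_zero, add_zero]
  obtain ⟨b, hab, hb⟩ := ((eventually_ge_atTop (-ϖ / δ)).and
    (eventually_powerMean_comp_lt hβ0.le hβ1.le hp hδ hϖ.le hgrow)).exists
  have hcont : Continuous fun f => powerMean β (1 - ρ) (δ * f + ϖ) :=
    (continuous_powerMean hp).comp (by fun_prop)
  obtain ⟨f, hf, hfix⟩ := exists_mem_Icc_isFixedPt hcont.continuousOn hab hstart.le hb.le
  refine ⟨f, ⟨hf.1, hfix⟩, fun g hg => ?_⟩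
  exact (concaveOn_powerMean_comp hβ0.le hβ1 hp (by linarith) hδ).subsingleton_Ici_inter_fixedPoints
    hstart hg ⟨hf.1, hfix⟩
end

section
/- Let 0<β<1 and ρ>0 with ρ≠1, and for y>0 define φ_y(c) = H(c, (1−c)y) = ((1−β)c^{1−ρ} + β((1−c)y)^{1−ρ})^{1/(1−ρ)} for c∈(0,1). Then φ_y attains a unique maximum on (0,1) at c* = (1 + y^{(1−ρ)/ρ}(β/(1−β))^{1/ρ})^{−1}, with φ_y'(c) > 0 for c < c* and φ_y'(c) < 0 for c > c*. -/
/-!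
Differentiating, `φ_y'(c) = H(c, (1-c)y) ^ ρ · g(c)` where
`g(c) = (1-β) c^(-ρ) - β y ((1-c)y)^(-ρ)` is strictly decreasing on `(0,1)`, and
`g(c*) = 0` because `(1 - c*) y = (β y / (1-β))^(1/ρ) c*`. So `φ_y'` is positive before `c*` and
negative after it, which makes `c*` the strict maximum.
-/

open Set

/-- `φ_y(c) = H(c, (1-c)y)` for the CES aggregator `H`. -/
noncomputable def phi14 (β ρ y c : ℝ) : ℝ :=
  ((1 - β) * c ^ (1 - ρ) + β * ((1 - c) * y) ^ (1 - ρ)) ^ (1 / (1 - ρ))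

/-- The optimal consumption fraction `c* = (1 + y^((1-ρ)/ρ) (β/(1-β))^(1/ρ))⁻¹`. -/
noncomputable def cstar14 (β ρ y : ℝ) : ℝ :=
  (1 + y ^ ((1 - ρ) / ρ) * (β / (1 - β)) ^ (1 / ρ))⁻¹

/-- The derivative of `phi14` divided by the positive factor `H(c, (1-c)y) ^ ρ`. -/
noncomputable def phi14DerivFactor (β ρ y c : ℝ) : ℝ :=
  (1 - β) * c ^ (-ρ) - β * y * ((1 - c) * y) ^ (-ρ)

theorem apply_lt_of_deriv_pos_of_deriv_neg {f : ℝ → ℝ} {a b m : ℝ} (hm : m ∈ Ioo a b)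
    (hf : DifferentiableOn ℝ f (Ioo a b)) (hpos : ∀ x ∈ Ioo a m, 0 < deriv f x)
    (hneg : ∀ x ∈ Ioo m b, deriv f x < 0) :
    ∀ x ∈ Ioo a b, x ≠ m → f x < f m := by
  have mono : StrictMonoOn f (Ioc a m) :=
    strictMonoOn_of_deriv_pos (convex_Ioc a m)
      (hf.continuousOn.mono (Ioc_subset_Ioo_right hm.2)) (by rwa [interior_Ioc])
  have anti : StrictAntiOn f (Ico m b) :=
    strictAntiOn_of_deriv_neg (convex_Ico m b)
      (hf.continuousOn.mono (Ico_subset_Ioo_left hm.1)) (by rwa [interior_Ico])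
  intro x hx hxm
  rcases hxm.lt_or_gt with h | h
  · exact mono ⟨hx.1, h.le⟩ ⟨hm.1, le_rfl⟩ h
  · exact anti ⟨le_rfl, hm.2⟩ ⟨h.le, hx.2⟩ h

section

variable {β ρ y : ℝ}

theorem cstar14_mem_Ioo (hβ0 : 0 < β) (hβ1 : β < 1) (hy : 0 < y) :
    cstar14 β ρ y ∈ Ioo 0 1 := by
  have hA : 0 < y ^ ((1 - ρ) / ρ) * (β / (1 - β)) ^ (1 / ρ) := by
    have : 0 < 1 - β := by linarith
    positivity
  exact ⟨by unfold cstar14; positivity, inv_lt_one_of_one_lt₀ (by linarith)⟩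

theorem one_sub_cstar14_mul (hβ0 : 0 < β) (hβ1 : β < 1) (hρ0 : 0 < ρ) (hy : 0 < y) :
    (1 - cstar14 β ρ y) * y = (β * y / (1 - β)) ^ (1 / ρ) * cstar14 β ρ y := by
  have h1β : 0 < 1 - β := by linarith
  have hAy : y ^ ((1 - ρ) / ρ) * (β / (1 - β)) ^ (1 / ρ) * y = (β * y / (1 - β)) ^ (1 / ρ) := by
    calc y ^ ((1 - ρ) / ρ) * (β / (1 - β)) ^ (1 / ρ) * y
        = y ^ ((1 - ρ) / ρ + 1) * (β / (1 - β)) ^ (1 / ρ) := by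
          rw [Real.rpow_add hy, Real.rpow_one]; ring
      _ = (y * (β / (1 - β))) ^ (1 / ρ) := by
          rw [Real.mul_rpow hy.le (by positivity)]; congr 2; field_simp; ring
      _ = (β * y / (1 - β)) ^ (1 / ρ) := by ring_nf
  rw [← hAy, cstar14]
  have hA : 0 < y ^ ((1 - ρ) / ρ) * (β / (1 - β)) ^ (1 / ρ) := by positivity
  field_simp
  ring

theorem phi14DerivFactor_cstar14 (hβ0 : 0 < β) (hβ1 : β < 1) (hρ0 : 0 < ρ) (hy : 0 < y) :
    phi14DerivFactor β ρ y (cstar14 β ρ y) = 0 := by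
  have h1β : 0 < 1 - β := by linarith
  have hc := (cstar14_mem_Ioo (ρ := ρ) hβ0 hβ1 hy).1
  have hB : ((β * y / (1 - β)) ^ (1 / ρ)) ^ (-ρ) = (1 - β) / (β * y) := by
    rw [← Real.rpow_mul (by positivity), show 1 / ρ * -ρ = -1 by field_simp,
      Real.rpow_neg_one, inv_div]
  rw [phi14DerivFactor, one_sub_cstar14_mul hβ0 hβ1 hρ0 hy,
    Real.mul_rpow (by positivity) hc.le, hB]
  field_simp
  ring

theorem strictAntiOn_phi14DerivFactor (hβ0 : 0 < β) (hβ1 : β < 1) (hρ0 : 0 < ρ) (hy : 0 < y) :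
    StrictAntiOn (phi14DerivFactor β ρ y) (Ioo 0 1) := by
  intro a ha b hb hab
  have h1β : 0 < 1 - β := by linarith
  have hb' : 0 < (1 - b) * y := mul_pos (by linarith [hb.2]) hy
  have hc : b ^ (-ρ) < a ^ (-ρ) := Real.rpow_lt_rpow_of_neg ha.1 hab (by linarith)
  have hd : ((1 - a) * y) ^ (-ρ) < ((1 - b) * y) ^ (-ρ) :=
    Real.rpow_lt_rpow_of_neg hb' (by nlinarith) (by linarith)
  unfold phi14DerivFactor
  nlinarith [mul_lt_mul_of_pos_left hc h1β, mul_lt_mul_of_pos_left hd (mul_pos hβ0 hy)]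

theorem phi14DerivFactor_pos_iff (hβ0 : 0 < β) (hβ1 : β < 1) (hρ0 : 0 < ρ) (hy : 0 < y)
    {c : ℝ} (hc : c ∈ Ioo 0 1) :
    0 < phi14DerivFactor β ρ y c ↔ c < cstar14 β ρ y := by
  rw [← phi14DerivFactor_cstar14 hβ0 hβ1 hρ0 hy]
  exact (strictAntiOn_phi14DerivFactor hβ0 hβ1 hρ0 hy).lt_iff_gt
    (cstar14_mem_Ioo hβ0 hβ1 hy) hc

theorem phi14DerivFactor_neg_iff (hβ0 : 0 < β) (hβ1 : β < 1) (hρ0 : 0 < ρ) (hy : 0 < y)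
    {c : ℝ} (hc : c ∈ Ioo 0 1) :
    phi14DerivFactor β ρ y c < 0 ↔ cstar14 β ρ y < c := by
  rw [← phi14DerivFactor_cstar14 hβ0 hβ1 hρ0 hy]
  exact (strictAntiOn_phi14DerivFactor hβ0 hβ1 hρ0 hy).lt_iff_gt hc
    (cstar14_mem_Ioo hβ0 hβ1 hy)

theorem hasDerivAt_phi14 (hβ0 : 0 < β) (hβ1 : β < 1) (hρ1 : ρ ≠ 1) (hy : 0 < y)
    {c : ℝ} (hc : c ∈ Ioo 0 1) :
    ∃ k > 0, HasDerivAt (phi14 β ρ y) (k * phi14DerivFactor β ρ y c) c := by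
  obtain ⟨hc0, hc1⟩ := hc
  have h1β : 0 < 1 - β := by linarith
  have hcy : 0 < (1 - c) * y := mul_pos (by linarith) hy
  have hu : 0 < (1 - β) * c ^ (1 - ρ) + β * ((1 - c) * y) ^ (1 - ρ) := by positivity
  have dlin : HasDerivAt (fun x : ℝ => (1 - x) * y) ((0 - 1) * y) c :=
    ((hasDerivAt_const c 1).sub (hasDerivAt_id c)).mul_const y
  have dphi :=
    (((Real.hasDerivAt_rpow_const (p := 1 - ρ) (Or.inl hc0.ne')).const_mul (1 - β)).add
      ((dlin.rpow_const (p := 1 - ρ) (Or.inl hcy.ne')).const_mul β)).rpow_const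
      (p := 1 / (1 - ρ)) (Or.inl hu.ne')
  refine ⟨_, Real.rpow_pos_of_pos hu (1 / (1 - ρ) - 1), ?_⟩
  convert dphi using 1
  · rfl
  rw [show 1 - ρ - 1 = -ρ by ring]
  simp only [phi14DerivFactor, Pi.add_apply]
  field_simp
  ring

end

/-- For `y > 0`, the map `c ↦ H(c,(1-c)y)` attains a unique maximum on `(0,1)` at
`c* = (1 + y^((1-ρ)/ρ)(β/(1-β))^(1/ρ))⁻¹`, with positive derivative before `c*` and
negative derivative after `c*`. -/
theorem stmt14 (β ρ y : ℝ) (hβ0 : 0 < β) (hβ1 : β < 1) (hρ0 : 0 < ρ) (hρ1 : ρ ≠ 1)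
    (hy : 0 < y) :
    cstar14 β ρ y ∈ Ioo (0 : ℝ) 1 ∧
    (∀ c ∈ Ioo (0 : ℝ) 1, c ≠ cstar14 β ρ y → phi14 β ρ y c < phi14 β ρ y (cstar14 β ρ y)) ∧
    (∀ c ∈ Ioo (0 : ℝ) 1, c < cstar14 β ρ y → 0 < deriv (phi14 β ρ y) c) ∧
    (∀ c ∈ Ioo (0 : ℝ) 1, cstar14 β ρ y < c → deriv (phi14 β ρ y) c < 0) := by
  have hmem := cstar14_mem_Ioo (ρ := ρ) hβ0 hβ1 hy
  have hpos : ∀ c ∈ Ioo (0 : ℝ) 1, c < cstar14 β ρ y → 0 < deriv (phi14 β ρ y) c := by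
    intro c hc hlt
    obtain ⟨k, hk, hd⟩ := hasDerivAt_phi14 hβ0 hβ1 hρ1 hy hc
    exact hd.deriv ▸ mul_pos hk ((phi14DerivFactor_pos_iff hβ0 hβ1 hρ0 hy hc).2 hlt)
  have hneg : ∀ c ∈ Ioo (0 : ℝ) 1, cstar14 β ρ y < c → deriv (phi14 β ρ y) c < 0 := by
    intro c hc hlt
    obtain ⟨k, hk, hd⟩ := hasDerivAt_phi14 hβ0 hβ1 hρ1 hy hc
    exact hd.deriv ▸ mul_neg_of_pos_of_neg hk ((phi14DerivFactor_neg_iff hβ0 hβ1 hρ0 hy hc).2 hlt)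
  have hdiff : DifferentiableOn ℝ (phi14 β ρ y) (Ioo 0 1) := fun c hc =>
    (hasDerivAt_phi14 hβ0 hβ1 hρ1 hy hc).choose_spec.2.differentiableAt.differentiableWithinAt
  refine ⟨hmem, apply_lt_of_deriv_pos_of_deriv_neg hmem hdiff ?_ ?_, hpos, hneg⟩
  · exact fun c hc => hpos c ⟨hc.1, hc.2.trans hmem.2⟩ hc.2
  · exact fun c hc => hneg c ⟨hmem.1.trans hc.1, hc.2⟩ hc.1
end

section
/- Let γ>0, γ≠1, let u(x)=x^{1−γ}, and let Z be a positive random variable with E[u(Z)] < ∞ on a probability space with sub-σ-algebra 𝒢. Suppose there exist η>0 and a positive function v with E[u(Z)·v' | 𝒢] = η v (a conditional eigenvalue relation, where v' is the next-period value of v). Define M = η^{−1} u(Z) v'/v. Then M > 0 and E[M | 𝒢] = 1, so M is a valid conditional Radon–Nikodym density; moreover for any positive f, u^{−1}(E[u(Z f')|𝒢]) = δ u^{−1}(v) u^{−1}(Ẽ[u(f'/u^{−1}(v'))|𝒢]), where δ = η^{1/(1−γ)} and Ẽ denotes expectation under the measure with density M. -/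
/-!
With `X = u(Z) v'`, the eigenvalue relation says `μ[X|𝒢] = η v`, so `M = X / μ[X|𝒢]`.
Pulling the `𝒢`-measurable factor `μ[X|𝒢]⁻¹` out of conditional expectations gives
`E[M|𝒢] = 1` and `Ẽ[u(f'/u⁻¹(v'))|𝒢] = E[u(Z f')|𝒢] / (η v)`, and applying `u⁻¹`
yields the identity. The one analytic point is that `M` is integrable although
`μ[X|𝒢]⁻¹` need not be bounded: by the pull-out property of the Lebesgue conditional
expectation, `∫⁻ M = ∫⁻ μ[X|𝒢]⁻¹ μ[X|𝒢] = 1`.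
-/

open MeasureTheory

open scoped ENNReal

namespace MeasureTheory

variable {Ω : Type*} {m m0 : MeasurableSpace Ω} {μ : Measure Ω}

theorem lintegral_condLExp_mul (hm : m ≤ m0) [SigmaFinite (μ.trim hm)] {X h : Ω → ℝ≥0∞}
    (hX : AEMeasurable X μ) (hh : Measurable[m] h) :
    ∫⁻ ω, μ⁻[X|m] ω * h ω ∂μ = ∫⁻ ω, X ω * h ω ∂μ := by
  have htrim : (μ.withDensity μ⁻[X|m]).trim hm = (μ.withDensity X).trim hm := by
    refine @Measure.ext _ m _ _ fun s hs => ?_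
    rw [trim_measurableSet_eq hm hs, trim_measurableSet_eq hm hs, withDensity_apply _ (hm s hs),
      withDensity_apply _ (hm s hs), setLIntegral_condLExp hm _ _ hs]
  have hh0 : AEMeasurable h μ := (hh.mono hm le_rfl).aemeasurable
  calc ∫⁻ ω, μ⁻[X|m] ω * h ω ∂μ
      = ∫⁻ ω, h ω ∂(μ.withDensity μ⁻[X|m]).trim hm := by
        rw [lintegral_trim hm hh,
          lintegral_withDensity_eq_lintegral_mul₀ (measurable_condLExp' m μ X).aemeasurable hh0]
        rfl
    _ = ∫⁻ ω, X ω * h ω ∂μ := by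
        rw [htrim, lintegral_trim hm hh, lintegral_withDensity_eq_lintegral_mul₀ hX hh0]
        rfl

theorem integrable_inv_condExp_mul [IsFiniteMeasure μ] (hm : m ≤ m0) {X : Ω → ℝ}
    (hX : Integrable X μ) (hX0 : 0 ≤ᵐ[μ] X) (hpos : ∀ᵐ ω ∂μ, 0 < μ[X|m] ω) :
    Integrable (fun ω => (μ[X|m] ω)⁻¹ * X ω) μ := by
  have hinv : Measurable[m] fun ω => (μ[X|m] ω)⁻¹ :=
    stronglyMeasurable_condExp.measurable.inv
  refine ⟨((hinv.mono hm le_rfl).aestronglyMeasurable).mul hX.1, ?_⟩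
  calc ∫⁻ ω, ‖(μ[X|m] ω)⁻¹ * X ω‖ₑ ∂μ
      = ∫⁻ ω, ENNReal.ofReal (X ω) * ENNReal.ofReal (μ[X|m] ω)⁻¹ ∂μ := by
        refine lintegral_congr_ae ?_
        filter_upwards [hpos, hX0] with ω hg hXω
        rw [Real.enorm_eq_ofReal (mul_nonneg (inv_nonneg.2 hg.le) hXω),
          ENNReal.ofReal_mul (inv_nonneg.2 hg.le), mul_comm]
    _ = ∫⁻ ω, ENNReal.ofReal (μ[X|m] ω) * ENNReal.ofReal (μ[X|m] ω)⁻¹ ∂μ := by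
        rw [← lintegral_condLExp_mul hm hX.1.aemeasurable.ennreal_ofReal hinv.ennreal_ofReal]
        exact lintegral_congr_ae
          ((condLExp_ofReal m hX hX0).mono fun ω hω => congrArg (· * _) hω)
    _ = μ Set.univ := by
        rw [← setLIntegral_one, Measure.restrict_univ]
        refine lintegral_congr_ae ?_
        filter_upwards [hpos] with ω hg
        rw [← ENNReal.ofReal_mul hg.le, mul_inv_cancel₀ hg.ne', ENNReal.ofReal_one]
    _ < ∞ := measure_lt_top μ _

theorem condExp_inv_condExp_mul {X Y : Ω → ℝ} (hY : Integrable Y μ)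
    (hXY : Integrable (fun ω => (μ[X|m] ω)⁻¹ * Y ω) μ) :
    μ[fun ω => (μ[X|m] ω)⁻¹ * Y ω|m] =ᵐ[μ] fun ω => (μ[X|m] ω)⁻¹ * μ[Y|m] ω :=
  condExp_mul_of_stronglyMeasurable_left
    stronglyMeasurable_condExp.measurable.inv.stronglyMeasurable hXY hY

theorem condExp_inv_condExp_mul_self [IsFiniteMeasure μ] (hm : m ≤ m0) {X : Ω → ℝ}
    (hX : Integrable X μ) (hX0 : 0 ≤ᵐ[μ] X) (hpos : ∀ᵐ ω ∂μ, 0 < μ[X|m] ω) :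
    μ[fun ω => (μ[X|m] ω)⁻¹ * X ω|m] =ᵐ[μ] fun _ => (1 : ℝ) := by
  filter_upwards [condExp_inv_condExp_mul hX (integrable_inv_condExp_mul hm hX hX0 hpos),
    hpos] with ω h hω
  rw [h, inv_mul_cancel₀ hω.ne']

end MeasureTheory

namespace Real

theorem div_rpow_one_div_rpow {a b p : ℝ} (ha : 0 ≤ a) (hb : 0 < b) (hp : p ≠ 0) :
    (a / b ^ (1 / p)) ^ p = a ^ p / b := by
  rw [div_rpow ha (rpow_nonneg hb.le _), ← rpow_mul hb.le, one_div_mul_cancel hp, rpow_one]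

theorem rpow_eq_rpow_mul_inv_mul_rpow {a c : ℝ} (p : ℝ) (ha : 0 < a) (hc : 0 ≤ c) :
    c ^ p = a ^ p * (a⁻¹ * c) ^ p := by
  rw [mul_rpow (inv_nonneg.2 ha.le) hc, inv_rpow ha.le, ← mul_assoc,
    mul_inv_cancel₀ (rpow_pos_of_pos ha p).ne', one_mul]

end Real

theorem stmt17_general {Ω : Type*} {m0 : MeasurableSpace Ω} (μ : Measure Ω)
    [IsProbabilityMeasure μ] (𝒢 : MeasurableSpace Ω) (h𝒢 : 𝒢 ≤ m0)
    (γ η : ℝ) (hγ1 : γ ≠ 1) (hη : 0 < η)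
    (Z v v' : Ω → ℝ) (hZ : ∀ ω, 0 < Z ω) (hv : ∀ ω, 0 < v ω) (hv' : ∀ ω, 0 < v' ω)
    (hint : Integrable (fun ω => Z ω ^ (1 - γ) * v' ω) μ)
    (heig : μ[fun ω => Z ω ^ (1 - γ) * v' ω | 𝒢] =ᵐ[μ] fun ω => η * v ω) :
    (∀ ω, 0 < η⁻¹ * Z ω ^ (1 - γ) * v' ω / v ω) ∧
    (μ[fun ω => η⁻¹ * Z ω ^ (1 - γ) * v' ω / v ω | 𝒢] =ᵐ[μ] fun _ => (1 : ℝ)) ∧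
    ∀ f' : Ω → ℝ, (∀ ω, 0 < f' ω) →
      Integrable (fun ω => (Z ω * f' ω) ^ (1 - γ)) μ →
      Integrable (fun ω =>
        (η⁻¹ * Z ω ^ (1 - γ) * v' ω / v ω) * (f' ω / v' ω ^ (1 / (1 - γ))) ^ (1 - γ)) μ →
      (fun ω => ((μ[fun ω' => (Z ω' * f' ω') ^ (1 - γ) | 𝒢]) ω) ^ (1 / (1 - γ)))
        =ᵐ[μ] fun ω => η ^ (1 / (1 - γ)) * v ω ^ (1 / (1 - γ)) *
          ((μ[fun ω' => (η⁻¹ * Z ω' ^ (1 - γ) * v' ω' / v ω') *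
              (f' ω' / v' ω' ^ (1 / (1 - γ))) ^ (1 - γ) | 𝒢]) ω) ^ (1 / (1 - γ)) := by
  set X : Ω → ℝ := fun ω => Z ω ^ (1 - γ) * v' ω
  have hX : ∀ ω, 0 < X ω := fun ω => mul_pos (Real.rpow_pos_of_pos (hZ ω) _) (hv' ω)
  have hgpos : ∀ᵐ ω ∂μ, 0 < μ[X|𝒢] ω := heig.mono fun ω h => h ▸ mul_pos hη (hv ω)
  have hM : (fun ω => η⁻¹ * Z ω ^ (1 - γ) * v' ω / v ω)
      =ᵐ[μ] fun ω => (μ[X|𝒢] ω)⁻¹ * X ω := by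
    filter_upwards [heig] with ω h
    rw [h]
    ring
  have hMpos : ∀ ω, 0 < η⁻¹ * Z ω ^ (1 - γ) * v' ω / v ω := fun ω => by
    rw [mul_assoc]
    exact div_pos (mul_pos (inv_pos.2 hη) (hX ω)) (hv ω)
  refine ⟨hMpos, (condExp_congr_ae hM).trans
      (condExp_inv_condExp_mul_self h𝒢 hint (ae_of_all _ fun ω => (hX ω).le) hgpos), ?_⟩
  intro f' hf' hY hK
  have hK' : (fun ω => (η⁻¹ * Z ω ^ (1 - γ) * v' ω / v ω) *
      (f' ω / v' ω ^ (1 / (1 - γ))) ^ (1 - γ))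
      =ᵐ[μ] fun ω => (μ[X|𝒢] ω)⁻¹ * (Z ω * f' ω) ^ (1 - γ) := by
    filter_upwards [heig] with ω h
    rw [h, Real.div_rpow_one_div_rpow (hf' ω).le (hv' ω) (sub_ne_zero.2 hγ1.symm),
      Real.mul_rpow (hZ ω).le (hf' ω).le]
    field_simp [(hv' ω).ne']
  have hYnn : 0 ≤ᵐ[μ] μ[fun ω => (Z ω * f' ω) ^ (1 - γ)|𝒢] :=
    condExp_nonneg (ae_of_all _ fun ω => Real.rpow_nonneg (mul_pos (hZ ω) (hf' ω)).le _)
  filter_upwards [heig, hYnn,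
    (condExp_congr_ae hK').trans (condExp_inv_condExp_mul hY (hK.congr hK'))]
    with ω hg hYω hKω
  rw [hKω, hg, ← Real.mul_rpow hη.le (hv ω).le]
  exact Real.rpow_eq_rpow_mul_inv_mul_rpow _ (mul_pos hη (hv ω)) hYω

/-- Change-of-measure identity for the recursive utility analysis: given the conditional
eigenvalue relation `E[u(Z) v' | 𝒢] = η v` with `u(x) = x^(1-γ)`, the quantity
`M = η⁻¹ u(Z) v'/v` is a positive conditional density (`M > 0`, `E[M|𝒢] = 1`),
and for every positive `f'`,
`u⁻¹(E[u(Z f')|𝒢]) = δ u⁻¹(v) u⁻¹(Ẽ[u(f'/u⁻¹(v'))|𝒢])`, where `δ = η^(1/(1-γ))`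
and the tilted conditional expectation is `Ẽ[X|𝒢] = E[M X|𝒢]`. -/
theorem stmt17 {Ω : Type*} {m0 : MeasurableSpace Ω} (μ : Measure Ω)
    [IsProbabilityMeasure μ] (𝒢 : MeasurableSpace Ω) (h𝒢 : 𝒢 ≤ m0)
    (γ η : ℝ) (hγ0 : 0 < γ) (hγ1 : γ ≠ 1) (hη : 0 < η)
    (Z v v' : Ω → ℝ) (hZ : ∀ ω, 0 < Z ω) (hv : ∀ ω, 0 < v ω) (hv' : ∀ ω, 0 < v' ω)
    (hint : Integrable (fun ω => Z ω ^ (1 - γ) * v' ω) μ)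
    (heig : μ[fun ω => Z ω ^ (1 - γ) * v' ω | 𝒢] =ᵐ[μ] fun ω => η * v ω) :
    (∀ ω, 0 < η⁻¹ * Z ω ^ (1 - γ) * v' ω / v ω) ∧
    (μ[fun ω => η⁻¹ * Z ω ^ (1 - γ) * v' ω / v ω | 𝒢] =ᵐ[μ] fun _ => (1 : ℝ)) ∧
    ∀ f' : Ω → ℝ, (∀ ω, 0 < f' ω) →
      Integrable (fun ω => (Z ω * f' ω) ^ (1 - γ)) μ →
      Integrable (fun ω =>
        (η⁻¹ * Z ω ^ (1 - γ) * v' ω / v ω) * (f' ω / v' ω ^ (1 / (1 - γ))) ^ (1 - γ)) μ →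
      (fun ω => ((μ[fun ω' => (Z ω' * f' ω') ^ (1 - γ) | 𝒢]) ω) ^ (1 / (1 - γ)))
        =ᵐ[μ] fun ω => η ^ (1 / (1 - γ)) * v ω ^ (1 / (1 - γ)) *
          ((μ[fun ω' => (η⁻¹ * Z ω' ^ (1 - γ) * v' ω' / v ω') *
              (f' ω' / v' ω' ^ (1 / (1 - γ))) ^ (1 - γ) | 𝒢]) ω) ^ (1 / (1 - γ)) :=
  stmt17_general μ 𝒢 h𝒢 γ η hγ1 hη Z v v' hZ hv hv' hint heig
end
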